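/- arXiv:2207.03101 — 2 statements merged into one kernel-verified Lean document; each statement's English description precedes it below -/
import Mathlib

section
/- Let e ∈ (0,1) and G, t > 0 satisfy t·G ≥ e·(t·G + e). Then G ≥ e²/(t(1-e)), and consequently -G + (1/t)·ω*(e) ≤ -G/2, where ω*(s) = -s - log(1-s). -/
open intervalIntegral in
lemma omega_star_bound (e : ℝ) (he0 : 0 < e) (he1 : e < 1) :
    -e - Real.log (1 - e) ≤ e ^ 2 / (2 * (1 - e)) := by
  have h1e : (0:ℝ) < 1 - e := by linarith
  have h1 : (∫ s in (0:ℝ)..e, (1 - s)⁻¹) = -Real.log (1 - e) := by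
    rw [intervalIntegral.integral_comp_sub_left (fun u => u⁻¹) 1]
    rw [integral_inv_of_pos h1e (by norm_num)]
    rw [sub_zero, Real.log_div (by norm_num) (ne_of_gt h1e), Real.log_one]
    ring
  have hint1 : IntervalIntegrable (fun s => (1 - s)⁻¹) MeasureTheory.volume 0 e := by
    apply ContinuousOn.intervalIntegrable
    apply ContinuousOn.inv₀ (by fun_prop)
    intro x hx
    rw [Set.uIcc_of_le he0.le] at hx
    have := hx.2
    intro h; linarith [hx.2]
  have hint2 : IntervalIntegrable (fun s => 1 + s / (1 - e)) MeasureTheory.volume 0 e := by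
    apply ContinuousOn.intervalIntegrable; fun_prop
  have hmono : (∫ s in (0:ℝ)..e, (1 - s)⁻¹) ≤ ∫ s in (0:ℝ)..e, (1 + s / (1 - e)) := by
    apply intervalIntegral.integral_mono_on he0.le hint1 hint2
    intro s hs
    have hs1 : (0:ℝ) < 1 - s := by linarith [hs.2]
    rw [inv_le_iff_one_le_mul₀ hs1]
    have hd : s / (1 - e) * (1 - e) = s := div_mul_cancel₀ _ (ne_of_gt h1e)
    have hq : 0 ≤ s / (1 - e) := div_nonneg hs.1 h1e.le
    have hqe : 0 ≤ s / (1 - e) * (e - s) := mul_nonneg hq (by linarith [hs.2])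
    nlinarith [hs.1, hs.2]
  have h3 : (∫ s in (0:ℝ)..e, (1 + s / (1 - e))) = e + e ^ 2 / (2 * (1 - e)) := by
    rw [intervalIntegral.integral_add (by apply ContinuousOn.intervalIntegrable; fun_prop)
      (by apply ContinuousOn.intervalIntegrable; fun_prop)]
    simp [integral_div, integral_id]
    field_simp
  rw [h1, h3] at hmono
  linarith

theorem full_step_decrease (e G t : ℝ) (he0 : 0 < e) (he1 : e < 1)
    (hG : 0 < G) (ht : 0 < t) (hstep : t * G ≥ e * (t * G + e)) :
    G ≥ e ^ 2 / (t * (1 - e)) ∧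
    -G + (1 / t) * (-e - Real.log (1 - e)) ≤ -G / 2 := by
  have h1e : (0:ℝ) < 1 - e := by linarith
  have hden : 0 < t * (1 - e) := mul_pos ht h1e
  have hGe : G ≥ e ^ 2 / (t * (1 - e)) := by
    rw [ge_iff_le, div_le_iff₀ hden]
    nlinarith
  refine ⟨hGe, ?_⟩
  have hω := omega_star_bound e he0 he1
  have h2 : (1 / t) * (-e - Real.log (1 - e)) ≤ (1 / t) * (e ^ 2 / (2 * (1 - e))) :=
    mul_le_mul_of_nonneg_left hω (by positivity)
  have h3 : (1 / t) * (e ^ 2 / (2 * (1 - e))) = (e ^ 2 / (t * (1 - e))) / 2 := by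
    field_simp
  linarith
end

section
/- Let (d_j)_{j≥1} be a sequence of nonnegative reals, (Γ_j)_{j≥1} a sequence with Γ_j ≥ d_j for all j, and M > 0, such that d_{j+1} ≤ d_j - Γ_j²/M for all j. Then for all j ≥ 2, d_j < M/(j-1) and min{Γ_1, …, Γ_j} < 2M/(j-1). -/
theorem zhao_freund_recursion (d Γ : ℕ → ℝ) (M : ℝ) (hM : 0 < M)
    (hd : ∀ j, 1 ≤ j → 0 ≤ d j)
    (hΓ : ∀ j, 1 ≤ j → Γ j ≥ d j)
    (hrec : ∀ j, 1 ≤ j → d (j + 1) ≤ d j - Γ j ^ 2 / M) :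
    ∀ j : ℕ, 2 ≤ j →
      d j < M / ((j : ℝ) - 1) ∧ ∃ i ∈ Finset.Icc 1 j, Γ i < 2 * M / ((j : ℝ) - 1) := by
  -- multiplied-out recursion
  have hrec' : ∀ j, 1 ≤ j → M * d (j + 1) + Γ j ^ 2 ≤ M * d j := by
    intro j hj
    have h := hrec j hj
    have h2 := mul_le_mul_of_nonneg_left h hM.le
    have h3 : M * (d j - Γ j ^ 2 / M) = M * d j - Γ j ^ 2 := by
      field_simp
    linarith [h2, h3.le, h3.ge]
  have hrec'' : ∀ j, 1 ≤ j → M * d (j + 1) + d j ^ 2 ≤ M * d j := by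
    intro j hj
    have h1 := hrec' j hj
    have h2 := hΓ j hj
    have h3 := hd j hj
    nlinarith
  -- Part 1 in multiplied form
  have key' : ∀ j : ℕ, 2 ≤ j → ((j : ℝ) - 1) * d j < M := by
    intro j hj
    induction j, hj using Nat.le_induction with
    | base =>
      have h1 := hrec'' 1 le_rfl
      have h2 := hd 1 le_rfl
      push_cast
      nlinarith [sq_nonneg (M - 2 * d 1)]
    | succ j hj ih =>
      have h1 := hrec'' j (by omega)
      have h2 := hd j (by omega)
      have h3 := hd (j + 1) (by omega)
      set r : ℝ := (j : ℝ) - 1 with hr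
      have hr1 : (1 : ℝ) ≤ r := by
        have : (2 : ℝ) ≤ (j : ℝ) := by exact_mod_cast hj
        simp [hr]; linarith
      push_cast
      have hgoal : ((j : ℝ) + 1 - 1) = r + 1 := by rw [hr]; ring
      rw [hgoal]
      -- identity: M^2 - (r+1)*M*x + (r+1)*x^2 = s^2 + (r-1)*s*x + x^2, s = M - r*x
      have hs : 0 < M - r * d j := by nlinarith
      nlinarith [sq_nonneg (M - r * d j), mul_nonneg (mul_nonneg (by linarith : (0:ℝ) ≤ r - 1) hs.le) h2, sq_nonneg (d j)]
  have key : ∀ j : ℕ, 2 ≤ j → d j < M / ((j : ℝ) - 1) := by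
    intro j hj
    have hr : (0 : ℝ) < (j : ℝ) - 1 := by
      have : (2 : ℝ) ≤ (j : ℝ) := by exact_mod_cast hj
      linarith
    rw [lt_div_iff₀ hr]
    have := key' j hj
    linarith [this, mul_comm ((j : ℝ) - 1) (d j)]
  -- chain lemma
  have chain : ∀ n k, 1 ≤ k → ∀ c : ℝ, 0 ≤ c → (∀ i, k ≤ i → i ≤ k + n → c ≤ Γ i) →
      M * d (k + n + 1) + ((n : ℝ) + 1) * c ^ 2 ≤ M * d k := by
    intro n
    induction n with
    | zero =>
      intro k hk c hc hi
      have h1 := hrec' k hk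
      have h2 := hi k le_rfl (by omega)
      have : c ^ 2 ≤ Γ k ^ 2 := by nlinarith
      push_cast
      simpa using by linarith
    | succ n IH =>
      intro k hk c hc hi
      have h1 := IH k hk c hc (fun i hik hin => hi i hik (by omega))
      have h2 := hrec' (k + n + 1) (by omega)
      have h3 := hi (k + n + 1) (by omega) (by omega)
      have h4 : c ^ 2 ≤ Γ (k + n + 1) ^ 2 := by nlinarith
      push_cast
      have he : k + (n + 1) + 1 = (k + n + 1) + 1 := by omega
      rw [he]
      linarith
  intro j hj
  refine ⟨key j hj, ?_⟩
  by_contra hcon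
  push_neg at hcon
  set r : ℝ := (j : ℝ) - 1 with hrdef
  have hr : (0 : ℝ) < r := by
    have : (2 : ℝ) ≤ (j : ℝ) := by exact_mod_cast hj
    simp [hrdef]; linarith
  set q : ℕ := j / 2 with hqdef
  have hq1 : 1 ≤ q := by omega
  have hqj : q + 1 ≤ j := by omega
  have hparity : j = 2 * q ∨ j = 2 * q + 1 := by omega
  have hq0 : (0 : ℝ) < (q : ℝ) := by exact_mod_cast hq1
  -- nat inequality cast: r^2 ≤ 4*q*(j-q)
  have hD : r ^ 2 ≤ 4 * (q : ℝ) * ((j : ℝ) - (q : ℝ)) := by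
    have hq1' : (1 : ℝ) ≤ (q : ℝ) := by exact_mod_cast hq1
    rcases hparity with h | h <;> rw [hrdef, h] <;> push_cast <;> nlinarith
  set c : ℝ := 2 * M / r with hcdef
  have hc0 : 0 ≤ c := by positivity
  set n : ℕ := j - (q + 1) with hndef
  have hkn : q + 1 + n = j := by omega
  have hA := chain n (q + 1) (by omega) c hc0 (fun i h1 h2 => by
    refine hcon i (Finset.mem_Icc.2 ⟨by omega, by omega⟩))
  rw [hkn] at hA
  have hn1 : ((n : ℝ) + 1) = (j : ℝ) - (q : ℝ) := by
    have : (n : ℝ) = (j : ℝ) - ((q : ℝ) + 1) := by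
      rw [hndef]; push_cast [Nat.cast_sub hqj]; ring
    linarith
  rw [hn1] at hA
  have hdj1 := hd (j + 1) (by omega)
  have hB := key (q + 1) (by omega)
  have hqcast : ((q : ℝ) + 1 - 1) = (q : ℝ) := by ring
  rw [show ((q + 1 : ℕ) : ℝ) = (q : ℝ) + 1 by push_cast; ring, hqcast] at hB
  have hB' : d (q + 1) * (q : ℝ) < M := (lt_div_iff₀ hq0).mp hB
  -- c^2 * r^2 = 4 M^2
  have hc2 : c ^ 2 * r ^ 2 = 4 * M ^ 2 := by
    rw [hcdef]; field_simp; ring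
  -- h1 : (j - q) * (4 M^2) ≤ M * d(q+1) * r^2
  have hstep : ((j : ℝ) - (q : ℝ)) * c ^ 2 ≤ M * d (q + 1) := by
    nlinarith [mul_nonneg hM.le hdj1]
  have h1 : ((j : ℝ) - (q : ℝ)) * (4 * M ^ 2) ≤ M * d (q + 1) * r ^ 2 := by
    have := mul_le_mul_of_nonneg_right hstep (sq_nonneg r)
    calc ((j : ℝ) - (q : ℝ)) * (4 * M ^ 2) = ((j : ℝ) - (q : ℝ)) * (c ^ 2 * r ^ 2) := by rw [hc2]
      _ = ((j : ℝ) - (q : ℝ)) * c ^ 2 * r ^ 2 := by ring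
      _ ≤ M * d (q + 1) * r ^ 2 := this
  have hMr2 : (0 : ℝ) < M * r ^ 2 := by positivity
  nlinarith [mul_le_mul_of_nonneg_left hD (mul_pos hM hM).le,
    mul_le_mul_of_nonneg_left h1 hq0.le,
    mul_lt_mul_of_pos_left hB' hMr2]
end
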